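/- For every c ≥ 1, the entropy integral of the Marchenko–Pastur measure π_c equals h_c = 1/2 + c·ln c; that is, ∫ x ln x dπ_c(x) = 1/2 + c ln c, where ln is the natural logarithm. -/

import Mathlib

/-!
For `c > 1` the substitution `x = 1 + c + 2√c sin θ` turns the integral into
`(2c/π) ∫_{-π/2}^{π/2} log (1 + c + 2√c sin θ) cos² θ dθ`. Write `cos² θ = (1 + cos 2θ)/2`.
Since `1 + c + 2√c sin θ = |e^{iθ} + i√c|²` with `√c > 1`, the logarithm is harmonic in the unit
disc, so its mean over the circle is `log c`; this part contributes `c log c`. The `cos 2θ` part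
has an elementary primitive and contributes `1/2`. At `c = 1` the support reaches `0` and the
substitution degenerates; there the value follows by continuity in `c` (dominated convergence
with the integrable bound `|log x|` on `(0, 9]`).
-/

open MeasureTheory

/-- The density of the absolutely continuous part of the Marchenko–Pastur
distribution with parameter `c`: `√(4c - (x-1-c)²)/(2πx)` on the interval
`[1+c-2√c, 1+c+2√c]`, and `0` elsewhere. -/
noncomputable def mpDensity (c : ℝ) (x : ℝ) : ℝ :=
  if 1 + c - 2 * Real.sqrt c ≤ x ∧ x ≤ 1 + c + 2 * Real.sqrt c then
    Real.sqrt (4 * c - (x - 1 - c) ^ 2) / (2 * Real.pi * x)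
  else 0

/-- The Marchenko–Pastur measure with parameter `c`:
`π_c = max(1-c,0)·δ₀ + mpDensity c · Lebesgue`. -/
noncomputable def mpMeasure (c : ℝ) : Measure ℝ :=
  ENNReal.ofReal (max (1 - c) 0) • Measure.dirac 0 +
    volume.withDensity fun x => ENNReal.ofReal (mpDensity c x)

open Real intervalIntegral Set Filter

lemma sq_sub_le_one_add_sq_add_two_mul_sin {s : ℝ} (hs : 0 ≤ s) (θ : ℝ) :
    (1 - s) ^ 2 ≤ 1 + s ^ 2 + 2 * s * sin θ := by
  nlinarith [neg_one_le_sin θ]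

lemma one_add_sq_add_two_mul_sin_pos {s : ℝ} (hs : 0 ≤ s) (hs1 : s ≠ 1) (θ : ℝ) :
    0 < 1 + s ^ 2 + 2 * s * sin θ :=
  (pow_pos (abs_pos.mpr (sub_ne_zero.mpr hs1.symm)) 2).trans_le
    (by simpa [sq_abs] using sq_sub_le_one_add_sq_add_two_mul_sin hs θ)

lemma hasDerivAt_arctan_tan_half {s θ : ℝ} (hs : 1 < s) (hθ : cos (θ / 2) ≠ 0) :
    HasDerivAt (fun θ => arctan (((1 + s ^ 2) * tan (θ / 2) + 2 * s) / (s ^ 2 - 1)))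
      ((s ^ 2 - 1) / (2 * (1 + s ^ 2 + 2 * s * sin θ))) θ := by
  have htan : HasDerivAt (fun θ => tan (θ / 2)) (1 / cos (θ / 2) ^ 2 * (1 / 2)) θ :=
    HasDerivAt.comp (h₂ := tan) θ (hasDerivAt_tan hθ) ((hasDerivAt_id' θ).div_const 2)
  refine ((((htan.const_mul (1 + s ^ 2)).add_const (2 * s)).div_const (s ^ 2 - 1)).arctan
    ).congr_deriv ?_
  have hs1 : s ^ 2 - 1 ≠ 0 := by nlinarith
  have hsin : sin θ = 2 * sin (θ / 2) * cos (θ / 2) := by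
    rw [← sin_two_mul]; ring_nf
  have hg := one_add_sq_add_two_mul_sin_pos (by linarith) hs.ne' θ
  rw [hsin] at hg ⊢
  rw [tan_eq_sin_div_cos]
  field_simp
  rw [eq_div_iff (by convert hg.ne' using 1; ring)]
  linear_combination (-(1 + s ^ 2) ^ 2) * sin_sq_add_cos_sq (θ / 2)

lemma log_one_add_sq_add_two_mul_sin (s θ : ℝ) :
    log (1 + s ^ 2 + 2 * s * sin θ) = 2 * log ‖circleMap 0 1 θ + s * Complex.I‖ := by
  have h := log_pow (n := 2) (x := ‖circleMap 0 1 θ + s * Complex.I‖)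
  push_cast at h
  rw [← h, ← Complex.normSq_eq_norm_sq, circleMap_zero, Complex.normSq_apply]
  congr 1
  simp only [Complex.ofReal_one, one_mul, Complex.add_re, Complex.exp_ofReal_mul_I_re,
    Complex.mul_re, Complex.ofReal_re, Complex.I_re, mul_zero, Complex.ofReal_im, Complex.I_im,
    mul_one, sub_self, add_zero, Complex.add_im, Complex.exp_ofReal_mul_I_im, Complex.mul_im]
  linear_combination (sin_sq_add_cos_sq θ).symm

lemma integral_log_one_add_sq_add_two_mul_sin_zero_two_pi (s : ℝ) :
    ∫ θ in 0..2 * π, log (1 + s ^ 2 + 2 * s * sin θ) = 4 * π * log⁺ s := by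
  have h := circleAverage_log_norm_add_const_eq_posLog (a := s * Complex.I)
  rw [circleAverage_def, smul_eq_mul, inv_mul_eq_iff_eq_mul₀ (by positivity)] at h
  simp only [log_one_add_sq_add_two_mul_sin s, intervalIntegral.integral_const_mul, h]
  simp only [norm_mul, Complex.norm_real, Complex.norm_I, mul_one, Real.norm_eq_abs, posLog_abs]
  ring

lemma integral_log_one_add_sq_add_two_mul_sin (s : ℝ) :
    ∫ θ in -(π / 2)..π / 2, log (1 + s ^ 2 + 2 * s * sin θ) = 2 * π * log⁺ s := by
  set f := fun θ => log (1 + s ^ 2 + 2 * s * sin θ)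
  have hper : Function.Periodic f (2 * π) := fun θ => by simp [f]
  have hint : IntervalIntegrable f volume 0 (0 + 2 * π) := by
    simpa [f, log_one_add_sq_add_two_mul_sin s] using
      (circleIntegrable_log_norm_sub_const (c := 0) (a := -(s * Complex.I)) 1).const_mul 2
  have hint' := hper.intervalIntegrable two_pi_pos.ne' hint
  have hrefl : ∫ θ in π / 2..3 * π / 2, f θ = ∫ θ in -(π / 2)..π / 2, f θ := by
    rw [← (show ∫ θ in -(π / 2)..π / 2, f (π - θ) = ∫ θ in -(π / 2)..π / 2, f θ by
      simp [f, sin_pi_sub]), integral_comp_sub_left]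
    congr 1 <;> ring
  have := hper.intervalIntegral_add_eq (-(π / 2)) 0
  rw [← integral_add_adjacent_intervals (hint' _ (π / 2)) (hint' _ _)] at this
  rw [show -(π / 2) + 2 * π = 3 * π / 2 by ring, hrefl, zero_add,
    integral_log_one_add_sq_add_two_mul_sin_zero_two_pi] at this
  linarith

/- Integration by parts, division of `2s sin θ cos² θ` by `1 + s² + 2s sin θ`, and the half-angle
substitution for the remaining `∫ dθ / (1 + s² + 2s sin θ)`. -/
lemma hasDerivAt_primitive_log_mul_cos_two_mul {s θ : ℝ} (hs : 1 < s)
    (hθ : cos (θ / 2) ≠ 0) :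
    HasDerivAt (fun θ => log (1 + s ^ 2 + 2 * s * sin θ) * sin (2 * θ) / 2
        + (θ - sin θ * cos θ) / 2 + (1 + s ^ 2) / (2 * s) * cos θ
        + (s ^ 2 - 1) ^ 2 / (4 * s ^ 2) * θ
        - (1 + s ^ 2) * (s ^ 2 - 1) / (2 * s ^ 2)
          * arctan (((1 + s ^ 2) * tan (θ / 2) + 2 * s) / (s ^ 2 - 1)))
      (log (1 + s ^ 2 + 2 * s * sin θ) * cos (2 * θ)) θ := by
  have hg := one_add_sq_add_two_mul_sin_pos (by linarith) hs.ne' θ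
  have hlog : HasDerivAt (fun θ => log (1 + s ^ 2 + 2 * s * sin θ))
      (2 * s * cos θ / (1 + s ^ 2 + 2 * s * sin θ)) θ :=
    (((hasDerivAt_sin θ).const_mul (2 * s)).const_add (1 + s ^ 2)).log hg.ne'
  have hsin2 : HasDerivAt (fun θ => sin (2 * θ)) (cos (2 * θ) * 2) θ :=
    ((hasDerivAt_id' θ).const_mul 2).sin.congr_deriv (by ring)
  have h1 := (hlog.mul hsin2).div_const 2
  have h2 := ((hasDerivAt_id' θ).sub ((hasDerivAt_sin θ).mul (hasDerivAt_cos θ))).div_const 2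
  have h3 := (hasDerivAt_cos θ).const_mul ((1 + s ^ 2) / (2 * s))
  have h4 := (hasDerivAt_id' θ).const_mul ((s ^ 2 - 1) ^ 2 / (4 * s ^ 2))
  have h5 := (hasDerivAt_arctan_tan_half hs hθ).const_mul ((1 + s ^ 2) * (s ^ 2 - 1) / (2 * s ^ 2))
  refine ((((h1.add h2).add h3).add h4).sub h5).congr_deriv ?_
  have hs0 : s ≠ 0 := by positivity
  rw [sin_two_mul, cos_two_mul]
  field_simp
  linear_combination (-8 * s ^ 2 * (1 + s ^ 2 - 2 * s * sin θ)) * sin_sq_add_cos_sq θ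

lemma integral_log_one_add_sq_add_two_mul_sin_mul_cos_two_mul {s : ℝ} (hs : 1 < s) :
    ∫ θ in -(π / 2)..π / 2, log (1 + s ^ 2 + 2 * s * sin θ) * cos (2 * θ)
      = π / (2 * s ^ 2) := by
  have hcos : ∀ θ ∈ uIcc (-(π / 2)) (π / 2), cos (θ / 2) ≠ 0 := fun θ hθ => by
    rw [uIcc_of_le (by linarith [pi_pos])] at hθ
    exact (cos_pos_of_mem_Ioo ⟨by linarith [hθ.1, pi_pos], by linarith [hθ.2, pi_pos]⟩).ne'
  have hint : IntervalIntegrable (fun θ => log (1 + s ^ 2 + 2 * s * sin θ) * cos (2 * θ))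
      volume (-(π / 2)) (π / 2) := by
    have := one_add_sq_add_two_mul_sin_pos (s := s) (by linarith) hs.ne'
    apply Continuous.intervalIntegrable
    fun_prop (disch := exact fun θ => (this θ).ne')
  rw [integral_eq_sub_of_hasDerivAt
    (fun θ hθ => hasDerivAt_primitive_log_mul_cos_two_mul hs (hcos θ hθ)) hint]
  have hs1 : s - 1 ≠ 0 := by linarith
  have hs2 : s ^ 2 - 1 ≠ 0 := by nlinarith
  have htop : ((1 + s ^ 2) * tan (π / 2 / 2) + 2 * s) / (s ^ 2 - 1) = (s + 1) / (s - 1) := by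
    rw [show π / 2 / 2 = π / 4 by ring, tan_pi_div_four]; field_simp; ring
  have hbot :
      ((1 + s ^ 2) * tan (-(π / 2) / 2) + 2 * s) / (s ^ 2 - 1) = -((s + 1) / (s - 1))⁻¹ := by
    rw [show -(π / 2) / 2 = -(π / 4) by ring, tan_neg, tan_pi_div_four]; field_simp; ring
  have harctan := arctan_inv_of_pos (div_pos (by linarith : 0 < s + 1) (by linarith : 0 < s - 1))
  simp only [htop, hbot, arctan_neg, harctan, mul_neg, sin_neg, cos_neg, sin_pi_div_two,
    cos_pi_div_two, show 2 * (π / 2) = π by ring, sin_pi, neg_zero, mul_zero, zero_div]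
  field_simp
  ring

noncomputable def mpEntropyIntegrand (c x : ℝ) : ℝ :=
  log x * √(4 * c - (x - 1 - c) ^ 2) / (2 * π)

lemma sqrt_four_mul_sub_sq_eq_zero_of_notMem {c x : ℝ} (hc : 0 ≤ c)
    (hx : x ∉ Ioo (1 + c - 2 * √c) (1 + c + 2 * √c)) : √(4 * c - (x - 1 - c) ^ 2) = 0 := by
  have hsq := sq_sqrt hc
  rw [sqrt_eq_zero']
  rw [mem_Ioo, not_and_or, not_lt, not_lt] at hx
  rcases hx with hx | hx <;> nlinarith [sqrt_nonneg c]

lemma mpEntropyIntegrand_eq_zero_of_notMem {c x : ℝ} (hc : 0 ≤ c)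
    (hx : x ∉ Ioo (1 + c - 2 * √c) (1 + c + 2 * √c)) : mpEntropyIntegrand c x = 0 := by
  simp [mpEntropyIntegrand, sqrt_four_mul_sub_sq_eq_zero_of_notMem hc hx]

lemma one_add_sub_two_mul_sqrt_nonneg {c : ℝ} (hc : 0 ≤ c) : 0 ≤ 1 + c - 2 * √c := by
  nlinarith [sq_sqrt hc, sq_nonneg (1 - √c)]

lemma mpDensity_nonneg {c : ℝ} (hc : 0 ≤ c) (x : ℝ) : 0 ≤ mpDensity c x := by
  unfold mpDensity
  split_ifs with h
  · have := (one_add_sub_two_mul_sqrt_nonneg hc).trans h.1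
    positivity
  · exact le_rfl

lemma measurable_mpDensity (c : ℝ) : Measurable (mpDensity c) :=
  Measurable.ite measurableSet_Icc (by fun_prop) (by fun_prop)

lemma mpDensity_mul_mul_log {c : ℝ} (hc : 0 ≤ c) (x : ℝ) :
    mpDensity c x * (x * log x) = mpEntropyIntegrand c x := by
  unfold mpDensity
  split_ifs with h
  · rcases eq_or_ne x 0 with rfl | hx
    · simp [mpEntropyIntegrand]
    · unfold mpEntropyIntegrand
      field_simp
  · rw [mpEntropyIntegrand_eq_zero_of_notMem hc fun hx => h ⟨hx.1.le, hx.2.le⟩, zero_mul]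

lemma integral_mpMeasure_of_one_le {c : ℝ} (hc : 1 ≤ c) (f : ℝ → ℝ) :
    ∫ x, f x ∂mpMeasure c = ∫ x, mpDensity c x * f x := by
  rw [mpMeasure, max_eq_right (by linarith), ENNReal.ofReal_zero, zero_smul, zero_add,
    integral_withDensity_eq_integral_toReal_smul (measurable_mpDensity c).ennreal_ofReal
      (ae_of_all _ fun _ => ENNReal.ofReal_lt_top)]
  simp only [ENNReal.toReal_ofReal (mpDensity_nonneg (by linarith) _), smul_eq_mul]

lemma integral_mpEntropyIntegrand_eq_intervalIntegral {c : ℝ} (hc : 0 ≤ c) :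
    ∫ x, mpEntropyIntegrand c x
      = ∫ x in (1 + c - 2 * √c)..(1 + c + 2 * √c), mpEntropyIntegrand c x := by
  rw [intervalIntegral.integral_of_le (by linarith [sqrt_nonneg c]),
    integral_Ioc_eq_integral_Ioo, setIntegral_eq_integral_of_forall_compl_eq_zero
      fun x hx => mpEntropyIntegrand_eq_zero_of_notMem hc hx]

lemma integral_mpEntropyIntegrand_sq {s : ℝ} (hs0 : 0 ≤ s) (hs1 : s ≠ 1) :
    ∫ x, mpEntropyIntegrand (s ^ 2) x
      = 2 * s ^ 2 / π
        * ∫ θ in -(π / 2)..π / 2, log (1 + s ^ 2 + 2 * s * sin θ) * cos θ ^ 2 := by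
  have hg := one_add_sq_add_two_mul_sin_pos hs0 hs1
  have hderiv : ∀ θ ∈ uIcc (-(π / 2)) (π / 2),
      HasDerivAt (fun θ => 1 + s ^ 2 + 2 * s * sin θ) (2 * s * cos θ) θ :=
    fun θ _ => ((hasDerivAt_sin θ).const_mul (2 * s)).const_add (1 + s ^ 2)
  have hcont : ContinuousOn (mpEntropyIntegrand (s ^ 2))
      ((fun θ => 1 + s ^ 2 + 2 * s * sin θ) '' uIcc (-(π / 2)) (π / 2)) := by
    rintro _ ⟨θ, -, rfl⟩
    unfold mpEntropyIntegrand
    exact (((continuousAt_log (hg θ).ne').mul (by fun_prop)).div_const _).continuousWithinAt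
  have hsub := integral_comp_mul_deriv' hderiv (by fun_prop) hcont
  simp only [sin_neg, sin_pi_div_two] at hsub
  rw [integral_mpEntropyIntegrand_eq_intervalIntegral (sq_nonneg s), sqrt_sq hs0,
    show 1 + s ^ 2 - 2 * s = 1 + s ^ 2 + 2 * s * -1 by ring,
    show 1 + s ^ 2 + 2 * s = 1 + s ^ 2 + 2 * s * 1 by ring, ← hsub,
    ← intervalIntegral.integral_const_mul]
  refine integral_congr fun θ hθ => ?_
  rw [uIcc_of_le (by linarith [pi_pos])] at hθ
  have hcos := cos_nonneg_of_mem_Icc hθ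
  have hsq : 4 * s ^ 2 - (1 + s ^ 2 + 2 * s * sin θ - 1 - s ^ 2) ^ 2 = (2 * s * cos θ) ^ 2 := by
    linear_combination -4 * s ^ 2 * sin_sq_add_cos_sq θ
  simp only [Function.comp, mpEntropyIntegrand, hsq, sqrt_sq (by positivity : 0 ≤ 2 * s * cos θ)]
  field_simp

lemma integral_mpEntropyIntegrand_of_one_lt {c : ℝ} (hc : 1 < c) :
    ∫ x, mpEntropyIntegrand c x = 1 / 2 + c * log c := by
  obtain ⟨s, hs, rfl⟩ : ∃ s, 1 < s ∧ s ^ 2 = c :=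
    ⟨√c, lt_sqrt_of_sq_lt (by linarith), sq_sqrt (by linarith)⟩
  have hg := one_add_sq_add_two_mul_sin_pos (s := s) (by linarith) hs.ne'
  have hlog : Continuous fun θ => log (1 + s ^ 2 + 2 * s * sin θ) := by
    fun_prop (disch := exact fun θ => (hg θ).ne')
  have hcos_sq : ∫ θ in -(π / 2)..π / 2, log (1 + s ^ 2 + 2 * s * sin θ) * cos θ ^ 2
      = π * log s + π / (4 * s ^ 2) := by
    have hsplit : ∀ θ, log (1 + s ^ 2 + 2 * s * sin θ) * cos θ ^ 2
        = log (1 + s ^ 2 + 2 * s * sin θ) / 2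
          + log (1 + s ^ 2 + 2 * s * sin θ) * cos (2 * θ) / 2 :=
      fun θ => by rw [cos_sq]; ring
    simp only [hsplit]
    have hint : IntervalIntegrable (fun θ => log (1 + s ^ 2 + 2 * s * sin θ) * cos (2 * θ) / 2)
        volume (-(π / 2)) (π / 2) := ((hlog.mul (by fun_prop)).div_const 2).intervalIntegrable _ _
    rw [integral_add ((hlog.div_const 2).intervalIntegrable _ _) hint,
      intervalIntegral.integral_div, intervalIntegral.integral_div,
      integral_log_one_add_sq_add_two_mul_sin,
      posLog_eq_log (by rw [abs_of_pos (by linarith)]; linarith),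
      integral_log_one_add_sq_add_two_mul_sin_mul_cos_two_mul hs]
    ring
  rw [integral_mpEntropyIntegrand_sq (by linarith) hs.ne', hcos_sq, log_pow]
  field_simp
  push_cast
  ring

lemma continuousOn_integral_mpEntropyIntegrand :
    ContinuousOn (fun c => ∫ x, mpEntropyIntegrand c x) (Icc 0 4) := by
  refine continuousOn_of_dominated (bound := (Ioc 0 9).indicator fun x => 2 / π * |log x|)
    (fun c _ => by unfold mpEntropyIntegrand; fun_prop) (fun c hc => ae_of_all _ fun x => ?_) ?_
    (ae_of_all _ fun x => by unfold mpEntropyIntegrand; fun_prop)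
  · by_cases hx : x ∈ Ioo (1 + c - 2 * √c) (1 + c + 2 * √c)
    · have hsqrt : √c ≤ 2 := sqrt_le_iff.mpr ⟨by norm_num, by linarith [hc.2]⟩
      have hx9 : x ∈ Ioc 0 9 := ⟨(one_add_sub_two_mul_sqrt_nonneg hc.1).trans_lt hx.1, by
        linarith [hx.2, hc.2]⟩
      have hroot : √(4 * c - (x - 1 - c) ^ 2) ≤ 4 :=
        sqrt_le_iff.mpr ⟨by norm_num, by nlinarith [hc.2]⟩
      rw [indicator_of_mem hx9, mpEntropyIntegrand, norm_div, norm_mul,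
        norm_of_nonneg (sqrt_nonneg _), Real.norm_eq_abs, norm_of_nonneg two_pi_pos.le]
      calc |log x| * √(4 * c - (x - 1 - c) ^ 2) / (2 * π) ≤ |log x| * 4 / (2 * π) := by gcongr
        _ = 2 / π * |log x| := by ring
    · rw [mpEntropyIntegrand_eq_zero_of_notMem hc.1 hx, norm_zero]
      exact indicator_nonneg (fun x _ => by positivity) x
  · rw [integrable_indicator_iff measurableSet_Ioc,
      ← intervalIntegrable_iff_integrableOn_Ioc_of_le (by norm_num)]
    exact intervalIntegrable_log'.abs.const_mul _

lemma integral_mpEntropyIntegrand {c : ℝ} (hc : 1 ≤ c) :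
    ∫ x, mpEntropyIntegrand c x = 1 / 2 + c * log c := by
  rcases hc.eq_or_lt with rfl | hc
  · have hformula : ContinuousOn (fun c : ℝ => 1 / 2 + c * log c) (Icc 1 4) := fun c hc =>
      (continuousAt_const.add (continuousAt_id.mul
        (continuousAt_log (by linarith [hc.1])))).continuousWithinAt
    refine EqOn.of_subset_closure (fun c hc => integral_mpEntropyIntegrand_of_one_lt hc.1)
      (continuousOn_integral_mpEntropyIntegrand.mono (Icc_subset_Icc_left zero_le_one))
      hformula Ioo_subset_Icc_self (closure_Ioo (by norm_num)).symm.subset ⟨le_rfl, by norm_num⟩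
  · exact integral_mpEntropyIntegrand_of_one_lt hc

/-- For every `c ≥ 1`, the entropy integral of the Marchenko–Pastur
measure `π_c` equals `h_c = 1/2 + c ln c`. -/
theorem mpMeasure_entropy_integral_ge_one (c : ℝ) (hc : 1 ≤ c) :
    ∫ x, x * Real.log x ∂(mpMeasure c) = 1 / 2 + c * Real.log c := by
  rw [integral_mpMeasure_of_one_le hc]
  simp only [mpDensity_mul_mul_log (zero_le_one.trans hc)]
  exact integral_mpEntropyIntegrand hc
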